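/- Let {e_n} be a semi-normalized strongly summing basic sequence in a Banach space whose difference sequence {v_n} is supershrinking. Then the closed linear span [e_n] is order one quasireflexive, i.e., [e_n] has codimension 1 in its bidual [e_n]**. -/

import Mathlib

/-!
Inside `Y = [eₙ]`, let `fᵢ` be the coordinate functionals of the basis `(eₙ)`. Strong summability
makes `σ x = ∑ fᵢ x` converge, and `(vₙ)` is again a basis of `Y`, with coordinate functionals
`gᵢ = σ - ∑_{j<i} f_j`. Since `(vₙ)` is shrinking, `F ∈ Y**` is determined by the numbers
`aᵢ = F gᵢ`, whose partial sums against `(vᵢ)` are bounded. Abel summation and strong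
summability of `(eₙ)` force `aᵢ → λ`, and supershrinkingness of `(vₙ)` makes `∑ (aᵢ - λ) vᵢ`
converge to some `y ∈ Y`. Hence `F = y + λ F₀`, where `F₀` is the weak* limit of `(eₙ)` in `Y**`;
and `F₀ ∉ Y` because `F₀ gᵢ = 1` for every `i`.
-/

open Filter Finset NormedSpace

noncomputable section

variable {X : Type*} [NormedAddCommGroup X] [NormedSpace ℝ X]

/-- Partial sums `∑_{i<n} a i • e i`. -/
def PartialSum (e : ℕ → X) (a : ℕ → ℝ) (n : ℕ) : X :=
  ∑ i ∈ Finset.range n, a i • e i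

/-- A (Schauder) basic sequence, via the basis-constant inequality. -/
def IsBasicSeq (e : ℕ → X) : Prop :=
  (∀ n, e n ≠ 0) ∧ ∃ K : ℝ, 1 ≤ K ∧ ∀ (a : ℕ → ℝ) (m n : ℕ), m ≤ n →
    ‖PartialSum e a m‖ ≤ K * ‖PartialSum e a n‖

def SemiNormalized (e : ℕ → X) : Prop :=
  ∃ c C : ℝ, 0 < c ∧ ∀ n, c ≤ ‖e n‖ ∧ ‖e n‖ ≤ C

def BoundedPartialSums (e : ℕ → X) (a : ℕ → ℝ) : Prop :=
  ∃ M : ℝ, ∀ n, ‖PartialSum e a n‖ ≤ M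

def SeriesConverges (e : ℕ → X) (a : ℕ → ℝ) : Prop :=
  ∃ x : X, Filter.Tendsto (PartialSum e a) Filter.atTop (nhds x)

def BoundedlyComplete (e : ℕ → X) : Prop :=
  ∀ a : ℕ → ℝ, BoundedPartialSums e a → SeriesConverges e a

def WeaklyCauchy (e : ℕ → X) : Prop :=
  ∀ f : X →L[ℝ] ℝ, ∃ l : ℝ, Filter.Tendsto (fun n => f (e n)) Filter.atTop (nhds l)

def WeaklyConvergesTo (x : ℕ → X) (l : X) : Prop :=
  ∀ f : X →L[ℝ] ℝ, Filter.Tendsto (fun n => f (x n)) Filter.atTop (nhds (f l))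

def StronglySumming (e : ℕ → X) : Prop :=
  WeaklyCauchy e ∧ ∀ a : ℕ → ℝ, BoundedPartialSums e a →
    ∃ s : ℝ, Filter.Tendsto (fun n => ∑ i ∈ Finset.range n, a i) Filter.atTop (nhds s)

/-- Closed linear span of the tail `{e k : k ≥ n}`. -/
def tailSpan (e : ℕ → X) (n : ℕ) : Submodule ℝ X :=
  (Submodule.span ℝ {x | ∃ k, n ≤ k ∧ x = e k}).topologicalClosure

/-- Shrinking: the norms of a functional restricted to the tail spans tend to `0`. -/
def Shrinking (e : ℕ → X) : Prop :=
  ∀ f : X →L[ℝ] ℝ, ∀ ε > 0, ∃ N, ∀ n ≥ N, ∀ x ∈ tailSpan e n, ‖x‖ ≤ 1 → |f x| ≤ ε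

def Supershrinking (e : ℕ → X) : Prop :=
  Shrinking e ∧ ∀ a : ℕ → ℝ, Filter.Tendsto a Filter.atTop (nhds 0) →
    BoundedPartialSums e a → SeriesConverges e a

/-- Difference sequence: `v 0 = e 0`, `v n = e n - e (n-1)`. -/
def diffSeq (e : ℕ → X) : ℕ → X :=
  fun n => if n = 0 then e 0 else e n - e (n - 1)

def closedSpan (e : ℕ → X) : Submodule ℝ X :=
  (Submodule.span ℝ (Set.range e)).topologicalClosure

/-- A Banach space is reflexive iff the canonical embedding into the bidual is onto. -/
def BanachReflexive (Y : Type*) [NormedAddCommGroup Y] [NormedSpace ℝ Y] : Prop :=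
  Function.Surjective (NormedSpace.inclusionInDoubleDual ℝ Y)

/-- Order one quasireflexive: the canonical image of `Y` in `Y**` has codimension 1. -/
def OrderOneQuasireflexive (Y : Type*) [NormedAddCommGroup Y] [NormedSpace ℝ Y] : Prop :=
  Module.finrank ℝ ((StrongDual ℝ (StrongDual ℝ Y)) ⧸
    LinearMap.range (NormedSpace.inclusionInDoubleDual ℝ Y).toLinearMap) = 1

/-- A Schauder basis of `X` with coordinate functionals `f`. -/
def IsSchauderBasis (e : ℕ → X) (f : ℕ → X →L[ℝ] ℝ) : Prop :=
  (∀ n m, f n (e m) = if n = m then 1 else 0) ∧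
  ∀ x : X, Filter.Tendsto (fun n => ∑ i ∈ Finset.range n, f i x • e i)
    Filter.atTop (nhds x)

/-- `X` contains a sequence equivalent to the unit vector basis of `c₀`
(equivalently, a subspace isomorphic to `c₀`). -/
def ContainsC0 (X : Type*) [NormedAddCommGroup X] [NormedSpace ℝ X] : Prop :=
  ∃ (x : ℕ → X) (c C : ℝ), 0 < c ∧ ∀ (a : ℕ → ℝ) (n : ℕ),
    c * ((Finset.range (n+1)).sup' Finset.nonempty_range_add_one fun i => |a i|) ≤
        ‖∑ i ∈ Finset.range (n+1), a i • x i‖ ∧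
      ‖∑ i ∈ Finset.range (n+1), a i • x i‖ ≤
        C * ((Finset.range (n+1)).sup' Finset.nonempty_range_add_one fun i => |a i|)

/-- Equivalence of sequences: same convergent coefficient series. -/
def EquivSeq (e v : ℕ → X) : Prop :=
  ∀ a : ℕ → ℝ, SeriesConverges e a ↔ SeriesConverges v a

open Topology

def basisProj (v : ℕ → X) (g : ℕ → StrongDual ℝ X) (n : ℕ) : X →L[ℝ] X :=
  ∑ i ∈ range n, (g i).smulRight (v i)

lemma basisProj_apply (v : ℕ → X) (g : ℕ → StrongDual ℝ X) (n : ℕ) (x : X) :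
    basisProj v g n x = PartialSum v (fun i => g i x) n := by
  simp [basisProj, PartialSum]

lemma comp_basisProj (v : ℕ → X) (g : ℕ → StrongDual ℝ X) (n : ℕ) (φ : StrongDual ℝ X) :
    φ.comp (basisProj v g n) = ∑ i ∈ range n, φ (v i) • g i := by
  ext x
  simp [basisProj_apply, PartialSum, mul_comm]

lemma exists_norm_le_of_tendsto {E : Type*} [NormedAddCommGroup E] [NormedSpace ℝ E]
    [CompleteSpace X] {T : ℕ → X →L[ℝ] E} {S : X → E}
    (h : ∀ x, Tendsto (fun n => T n x) atTop (𝓝 (S x))) : ∃ B, ∀ n, ‖T n‖ ≤ B :=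
  banach_steinhaus fun x => by
    obtain ⟨B, hB⟩ := (h x).norm.bddAbove_range
    exact ⟨B, fun n => hB ⟨n, rfl⟩⟩

lemma Shrinking.exists_abs_le_mul_norm {v : ℕ → X} (hs : Shrinking v) (φ : StrongDual ℝ X)
    {ε : ℝ} (hε : 0 < ε) : ∃ N, ∀ n ≥ N, ∀ x ∈ tailSpan v n, |φ x| ≤ ε * ‖x‖ := by
  obtain ⟨N, hN⟩ := hs φ ε hε
  refine ⟨N, fun n hn x hx => ?_⟩
  have hres : ‖φ.comp (tailSpan v n).subtypeL‖ ≤ ε :=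
    ContinuousLinearMap.opNorm_le_of_unit_norm hε.le fun w hw => hN n hn w w.2 hw.le
  simpa using ((φ.comp (tailSpan v n).subtypeL).le_opNorm ⟨x, hx⟩).trans
    (mul_le_mul_of_nonneg_right hres (norm_nonneg _))

namespace IsSchauderBasis

variable {v : ℕ → X} {g : ℕ → StrongDual ℝ X}

lemma tendsto_basisProj (hv : IsSchauderBasis v g) (x : X) :
    Tendsto (fun n => basisProj v g n x) atTop (𝓝 x) := by
  simp only [basisProj_apply]
  exact hv.2 x

lemma coord_partialSum (hv : IsSchauderBasis v g) (b : ℕ → ℝ) {i n : ℕ} (hin : i < n) :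
    g i (PartialSum v b n) = b i := by
  simp [PartialSum, hv.1, hin]

lemma coord_eq_of_tendsto (hv : IsSchauderBasis v g) {b : ℕ → ℝ} {y : X}
    (hy : Tendsto (PartialSum v b) atTop (𝓝 y)) (i : ℕ) : g i y = b i :=
  tendsto_nhds_unique (((g i).continuous.tendsto y).comp hy)
    (tendsto_const_nhds.congr' <| (eventually_gt_atTop i).mono fun _ hn =>
      (hv.coord_partialSum b hn).symm)

lemma eq_zero_of_coord_eq_zero (hv : IsSchauderBasis v g) {y : X} (hy : ∀ i, g i y = 0) :
    y = 0 :=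
  tendsto_nhds_unique (hv.tendsto_basisProj y) (by simp [basisProj_apply, PartialSum, hy])

lemma sub_basisProj_mem_tailSpan (hv : IsSchauderBasis v g) (n : ℕ) (x : X) :
    x - basisProj v g n x ∈ tailSpan v n := by
  have hlim : Tendsto (fun m => basisProj v g m x - basisProj v g n x) atTop
      (𝓝 (x - basisProj v g n x)) := (hv.tendsto_basisProj x).sub_const _
  refine (Submodule.isClosed_topologicalClosure _).mem_of_tendsto hlim
    ((eventually_ge_atTop n).mono fun m hm => ?_)
  rw [basisProj_apply, basisProj_apply, PartialSum, PartialSum, ← sum_Ico_eq_sub _ hm]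
  exact Submodule.le_topologicalClosure _ <| Submodule.sum_mem _ fun i hi =>
    Submodule.smul_mem _ _ (Submodule.subset_span ⟨i, (mem_Ico.mp hi).1, rfl⟩)

lemma boundedPartialSums_bidual [CompleteSpace X] (hv : IsSchauderBasis v g)
    (F : StrongDual ℝ (StrongDual ℝ X)) : BoundedPartialSums v (fun i => F (g i)) := by
  obtain ⟨B, hB⟩ := exists_norm_le_of_tendsto hv.tendsto_basisProj
  have hB0 : 0 ≤ B := (norm_nonneg _).trans (hB 0)
  refine ⟨‖F‖ * B, fun n => norm_le_dual_bound ℝ _ (by positivity) fun φ => ?_⟩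
  have : φ (PartialSum v (fun i => F (g i)) n) = F (φ.comp (basisProj v g n)) := by
    simp [comp_basisProj, PartialSum, mul_comm]
  rw [this]
  calc ‖F (φ.comp (basisProj v g n))‖ ≤ ‖F‖ * (‖φ‖ * B) :=
        F.le_opNorm_of_le ((φ.opNorm_comp_le _).trans (by gcongr; exact hB n))
    _ = ‖F‖ * B * ‖φ‖ := by ring

/-- Shrinking makes `φ` small, relative to `‖x‖`, on the tails `x - basisProj v g n x`. -/
lemma tendsto_comp_basisProj [CompleteSpace X] (hv : IsSchauderBasis v g) (hs : Shrinking v)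
    (φ : StrongDual ℝ X) : Tendsto (fun n => φ.comp (basisProj v g n)) atTop (𝓝 φ) := by
  obtain ⟨B, hB⟩ := exists_norm_le_of_tendsto hv.tendsto_basisProj
  have hB0 : 0 ≤ B := (norm_nonneg _).trans (hB 0)
  rw [Metric.tendsto_atTop]
  intro ε hε
  obtain ⟨N, hN⟩ := hs.exists_abs_le_mul_norm φ (ε := ε / (2 * (1 + B))) (by positivity)
  refine ⟨N, fun n hn => ?_⟩
  rw [dist_eq_norm']
  refine lt_of_le_of_lt (ContinuousLinearMap.opNorm_le_bound _ (by positivity) fun x => ?_)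
    (half_lt_self hε)
  have hx : ‖x - basisProj v g n x‖ ≤ (1 + B) * ‖x‖ := by
    calc ‖x - basisProj v g n x‖ ≤ ‖x‖ + B * ‖x‖ :=
          (norm_sub_le _ _).trans (add_le_add le_rfl ((basisProj v g n).le_of_opNorm_le (hB n) x))
      _ = (1 + B) * ‖x‖ := by ring
  calc ‖(φ - φ.comp (basisProj v g n)) x‖ = |φ (x - basisProj v g n x)| := by
        simp [Real.norm_eq_abs]
    _ ≤ ε / (2 * (1 + B)) * ((1 + B) * ‖x‖) :=
        (hN n hn _ (hv.sub_basisProj_mem_tailSpan n x)).trans (by gcongr)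
    _ = ε / 2 * ‖x‖ := by field_simp

lemma bidual_ext [CompleteSpace X] (hv : IsSchauderBasis v g) (hs : Shrinking v)
    {F G : StrongDual ℝ (StrongDual ℝ X)} (h : ∀ i, F (g i) = G (g i)) : F = G := by
  ext φ
  have hlim (H : StrongDual ℝ (StrongDual ℝ X)) :=
    (H.continuous.tendsto φ).comp (hv.tendsto_comp_basisProj hs φ)
  refine tendsto_nhds_unique (hlim F) ((hlim G).congr fun n => ?_)
  simp [comp_basisProj, h]

end IsSchauderBasis

lemma partialSum_eq_linearCombination (e : ℕ → X) {l : ℕ →₀ ℝ} {N : ℕ}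
    (hN : l.support ⊆ range N) : PartialSum e l N = Finsupp.linearCombination ℝ e l := by
  rw [Finsupp.linearCombination_apply,
    Finsupp.sum_of_support_subset l hN _ fun i _ => zero_smul ℝ (e i)]
  rfl

lemma eventually_basisProj_eq {e : ℕ → X} {f : ℕ → StrongDual ℝ X}
    (hf : ∀ n m, f n (e m) = if n = m then 1 else 0) {z : X}
    (hz : z ∈ Submodule.span ℝ (Set.range e)) : ∀ᶠ n in atTop, basisProj e f n z = z := by
  induction hz using Submodule.span_induction with
  | mem x hx =>
    obtain ⟨m, rfl⟩ := hx
    filter_upwards [eventually_gt_atTop m] with n hn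
    simp [basisProj_apply, PartialSum, hf, hn]
  | zero => simp
  | add x y _ _ hx hy =>
    filter_upwards [hx, hy] with n hxn hyn
    simp [hxn, hyn]
  | smul a x _ hx =>
    filter_upwards [hx] with n hn
    simp [hn]

def HasBasisConstant (e : ℕ → X) (K : ℝ) : Prop :=
  ∀ (a : ℕ → ℝ) (m n : ℕ), m ≤ n → ‖PartialSum e a m‖ ≤ K * ‖PartialSum e a n‖

namespace HasBasisConstant

variable {e : ℕ → X} {K : ℝ} {f : ℕ → StrongDual ℝ X}

lemma norm_smul_le (h : HasBasisConstant e K) (a : ℕ → ℝ) {m n : ℕ} (hmn : m < n) :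
    ‖a m • e m‖ ≤ 2 * K * ‖PartialSum e a n‖ := by
  have hsucc : a m • e m = PartialSum e a (m + 1) - PartialSum e a m := by
    simp [PartialSum, sum_range_succ]
  calc ‖a m • e m‖ ≤ ‖PartialSum e a (m + 1)‖ + ‖PartialSum e a m‖ := hsucc ▸ norm_sub_le _ _
    _ ≤ K * ‖PartialSum e a n‖ + K * ‖PartialSum e a n‖ :=
        add_le_add (h a _ _ hmn) (h a _ _ hmn.le)
    _ = 2 * K * ‖PartialSum e a n‖ := by ring

lemma norm_smul_le_linearCombination (h : HasBasisConstant e K) (l : ℕ →₀ ℝ) (m : ℕ) :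
    ‖l m • e m‖ ≤ 2 * K * ‖Finsupp.linearCombination ℝ e l‖ := by
  obtain ⟨N, hN⟩ := l.support.exists_nat_subset_range
  rw [← partialSum_eq_linearCombination e
    (hN.trans (range_subset_range.mpr (le_max_left N (m + 1))))]
  exact h.norm_smul_le l (lt_of_lt_of_le m.lt_succ_self (le_max_right _ _))

lemma linearIndependent (h : HasBasisConstant e K) (hne : ∀ n, e n ≠ 0) :
    LinearIndependent ℝ e :=
  linearIndependent_iff.mpr fun l hl => Finsupp.ext fun m => by
    simpa [hl, hne m] using h.norm_smul_le_linearCombination l m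

lemma exists_biorthogonal (h : HasBasisConstant e K) (hne : ∀ n, e n ≠ 0) :
    ∃ f : ℕ → StrongDual ℝ X, ∀ n m, f n (e m) = if n = m then 1 else 0 := by
  have li := h.linearIndependent hne
  have hbound (m : ℕ) (z : Submodule.span ℝ (Set.range e)) :
      ‖li.repr z m‖ ≤ 2 * K / ‖e m‖ * ‖z‖ := by
    have := h.norm_smul_le_linearCombination (li.repr z) m
    rw [li.linearCombination_repr, norm_smul] at this
    rw [div_mul_eq_mul_div, le_div_iff₀ (norm_pos_iff.mpr (hne m))]
    exact this
  choose f hf _ using fun m => exists_extension_norm_eq _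
    (LinearMap.mkContinuous ((Finsupp.lapply m).comp li.repr) _ (hbound m))
  refine ⟨f, fun n m => ?_⟩
  have hm : e m ∈ Submodule.span ℝ (Set.range e) := Submodule.subset_span ⟨m, rfl⟩
  rw [show e m = ((⟨e m, hm⟩ : Submodule.span ℝ (Set.range e)) : X) from rfl, hf]
  change li.repr ⟨e m, hm⟩ n = _
  rw [li.repr_eq_single m _ rfl, Finsupp.single_apply]
  simp only [eq_comm]

lemma norm_basisProj_apply_le (h : HasBasisConstant e K)
    (hf : ∀ n m, f n (e m) = if n = m then 1 else 0)
    (hdense : Dense (Submodule.span ℝ (Set.range e) : Set X)) (n : ℕ) (x : X) :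
    ‖basisProj e f n x‖ ≤ K * ‖x‖ := by
  refine hdense.induction (fun z hz => ?_) (isClosed_le (by fun_prop) (by fun_prop)) x
  obtain ⟨N, hN⟩ := (eventually_basisProj_eq hf hz).exists_forall_of_atTop
  have := h (fun i => f i z) n (max n N) (le_max_left _ _)
  rwa [← basisProj_apply, ← basisProj_apply, hN _ (le_max_right _ _)] at this

lemma isSchauderBasis (h : HasBasisConstant e K)
    (hf : ∀ n m, f n (e m) = if n = m then 1 else 0)
    (hdense : Dense (Submodule.span ℝ (Set.range e) : Set X)) : IsSchauderBasis e f := by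
  refine ⟨hf, fun x => ?_⟩
  have hbound : ∃ C, ∀ n x, ‖basisProj e f n x‖ ≤ C * ‖x‖ :=
    ⟨K, h.norm_basisProj_apply_le hf hdense⟩
  have hequi : Equicontinuous fun n => ⇑(basisProj e f n) :=
    ((NormedSpace.equicontinuous_TFAE (basisProj e f)).out 3 1).mp hbound
  have hlim : Tendsto (fun n => basisProj e f n x) atTop (𝓝 x) :=
    hdense.induction (P := fun x => Tendsto (fun n => basisProj e f n x) atTop (𝓝 x))
      (fun z hz => tendsto_const_nhds.congr' <|
        (eventually_basisProj_eq hf hz).mono fun _ hn => hn.symm)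
      (hequi.isClosed_setOfPred_tendsto continuous_id) x
  simpa only [basisProj_apply, PartialSum] using hlim

end HasBasisConstant

lemma diffSeq_succ {E : Type*} [NormedAddCommGroup E] (e : ℕ → E) (n : ℕ) :
    diffSeq e (n + 1) = e (n + 1) - e n := by
  simp [diffSeq]

lemma sum_range_succ_diffSeq {E : Type*} [NormedAddCommGroup E] (e : ℕ → E) (n : ℕ) :
    ∑ k ∈ range (n + 1), diffSeq e k = e n := by
  induction n with
  | zero => simp [diffSeq]
  | succ n ih => rw [sum_range_succ, ih, diffSeq_succ, add_sub_cancel]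

lemma partialSum_diffSeq_succ (e : ℕ → X) (b : ℕ → ℝ) (n : ℕ) :
    PartialSum (diffSeq e) b (n + 1) = PartialSum e (fun i => b i - b (i + 1)) n + b n • e n := by
  induction n with
  | zero => simp [PartialSum, diffSeq]
  | succ n ih =>
    rw [PartialSum, sum_range_succ, ← PartialSum, ih, PartialSum, PartialSum, sum_range_succ,
      diffSeq_succ]
    simp only [sub_smul, smul_sub]
    abel

lemma exists_tendsto_of_boundedPartialSums_diffSeq {e : ℕ → X} {a : ℕ → ℝ} {A C : ℝ}
    (hsum : ∀ a : ℕ → ℝ, BoundedPartialSums e a →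
      ∃ s : ℝ, Tendsto (fun n => ∑ i ∈ range n, a i) atTop (𝓝 s))
    (ha : BoundedPartialSums (diffSeq e) a) (hA : ∀ n, |a n| ≤ A) (hC : ∀ n, ‖e n‖ ≤ C) :
    ∃ l, Tendsto a atTop (𝓝 l) := by
  obtain ⟨M, hM⟩ := ha
  have hd : BoundedPartialSums e (fun i => a i - a (i + 1)) := by
    refine ⟨M + A * C, fun n => ?_⟩
    rw [eq_sub_of_add_eq (partialSum_diffSeq_succ e a n).symm]
    calc _ ≤ ‖PartialSum (diffSeq e) a (n + 1)‖ + ‖a n • e n‖ := norm_sub_le _ _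
      _ ≤ M + A * C := by
        rw [norm_smul, Real.norm_eq_abs]
        exact add_le_add (hM _)
          (mul_le_mul (hA n) (hC n) (norm_nonneg _) ((abs_nonneg _).trans (hA n)))
  obtain ⟨s, hs⟩ := hsum _ hd
  simp only [sum_range_sub'] at hs
  exact ⟨a 0 - s, by simpa using hs.const_sub (a 0)⟩

lemma BoundedPartialSums.diffSeq_sub_const {e : ℕ → X} {a : ℕ → ℝ} {C : ℝ}
    (ha : BoundedPartialSums (diffSeq e) a) (hC : ∀ n, ‖e n‖ ≤ C) (l : ℝ) :
    BoundedPartialSums (diffSeq e) (fun i => a i - l) := by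
  obtain ⟨M, hM⟩ := ha
  refine ⟨M + |l| * C, fun n => ?_⟩
  have hsplit : PartialSum (diffSeq e) (fun i => a i - l) n =
      PartialSum (diffSeq e) a n - l • ∑ k ∈ range n, diffSeq e k := by
    simp [PartialSum, sub_smul, smul_sum]
  have htel : ‖∑ k ∈ range n, diffSeq e k‖ ≤ C := by
    cases n with
    | zero => simpa using (norm_nonneg _).trans (hC 0)
    | succ n => rw [sum_range_succ_diffSeq]; exact hC n
  rw [hsplit]
  calc _ ≤ ‖PartialSum (diffSeq e) a n‖ + ‖l • ∑ k ∈ range n, diffSeq e k‖ := norm_sub_le _ _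
    _ ≤ M + |l| * C := by
      rw [norm_smul, Real.norm_eq_abs]
      gcongr
      exact hM n

lemma IsSchauderBasis.exists_tendsto_sum_coord [CompleteSpace X] {e : ℕ → X}
    {f : ℕ → StrongDual ℝ X} (hb : IsSchauderBasis e f)
    (hsum : ∀ a : ℕ → ℝ, BoundedPartialSums e a →
      ∃ s : ℝ, Tendsto (fun n => ∑ i ∈ range n, a i) atTop (𝓝 s)) :
    ∃ σ : StrongDual ℝ X, ∀ x, Tendsto (fun n => ∑ j ∈ range n, f j x) atTop (𝓝 (σ x)) := by
  have hbdd (x : X) : BoundedPartialSums e (fun i => f i x) := by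
    obtain ⟨M, hM⟩ := (hb.2 x).norm.bddAbove_range
    exact ⟨M, fun n => hM ⟨n, rfl⟩⟩
  choose s hs using fun x => hsum _ (hbdd x)
  have hlim : Tendsto (fun n x => (∑ j ∈ range n, f j) x) atTop (𝓝 s) :=
    tendsto_pi_nhds.mpr fun x => by simpa using hs x
  exact ⟨continuousLinearMapOfTendsto _ hlim, hs⟩

def diffCoord (f : ℕ → StrongDual ℝ X) (σ : StrongDual ℝ X) (i : ℕ) : StrongDual ℝ X :=
  σ - ∑ j ∈ range i, f j

lemma diffCoord_apply (f : ℕ → StrongDual ℝ X) (σ : StrongDual ℝ X) (i : ℕ) (x : X) :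
    diffCoord f σ i x = σ x - ∑ j ∈ range i, f j x := by
  simp [diffCoord]

lemma diffCoord_sub_diffCoord_succ (f : ℕ → StrongDual ℝ X) (σ : StrongDual ℝ X) (i : ℕ)
    (x : X) : diffCoord f σ i x - diffCoord f σ (i + 1) x = f i x := by
  simp [diffCoord_apply, sum_range_succ]

lemma diffCoord_apply_eq {e : ℕ → X} {f : ℕ → StrongDual ℝ X} {σ : StrongDual ℝ X}
    (hf : ∀ n m, f n (e m) = if n = m then 1 else 0)
    (hσ : ∀ x, Tendsto (fun n => ∑ j ∈ range n, f j x) atTop (𝓝 (σ x))) (i n : ℕ) :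
    diffCoord f σ i (e n) = if i ≤ n then 1 else 0 := by
  have hσe : σ (e n) = 1 :=
    tendsto_nhds_unique (hσ (e n)) <| tendsto_const_nhds.congr' <|
      (eventually_gt_atTop n).mono fun m hm => by simp [hf, hm]
  rw [diffCoord_apply, hσe]
  simp only [hf, sum_ite_eq', mem_range]
  split_ifs <;> first | omega | norm_num

lemma diffCoord_diffSeq {e : ℕ → X} {f : ℕ → StrongDual ℝ X} {σ : StrongDual ℝ X}
    (hf : ∀ n m, f n (e m) = if n = m then 1 else 0)
    (hσ : ∀ x, Tendsto (fun n => ∑ j ∈ range n, f j x) atTop (𝓝 (σ x))) (i k : ℕ) :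
    diffCoord f σ i (diffSeq e k) = if i = k then 1 else 0 := by
  cases k with
  | zero => simp [diffSeq, diffCoord_apply_eq hf hσ]
  | succ k =>
    rw [diffSeq_succ, map_sub, diffCoord_apply_eq hf hσ, diffCoord_apply_eq hf hσ]
    split_ifs <;> first | omega | norm_num

lemma basisProj_diffSeq_succ (e : ℕ → X) (f : ℕ → StrongDual ℝ X) (σ : StrongDual ℝ X)
    (n : ℕ) (x : X) :
    basisProj (diffSeq e) (diffCoord f σ) (n + 1) x =
      basisProj e f n x + diffCoord f σ n x • e n := by
  simp only [basisProj_apply, partialSum_diffSeq_succ, diffCoord_sub_diffCoord_succ]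

lemma tendsto_diffCoord_apply {f : ℕ → StrongDual ℝ X} {σ : StrongDual ℝ X}
    (hσ : ∀ x, Tendsto (fun n => ∑ j ∈ range n, f j x) atTop (𝓝 (σ x))) (x : X) :
    Tendsto (fun n => diffCoord f σ n x) atTop (𝓝 0) := by
  simpa [diffCoord_apply] using (hσ x).const_sub (σ x)

lemma IsSchauderBasis.diffSeq {e : ℕ → X} {f : ℕ → StrongDual ℝ X} {σ : StrongDual ℝ X}
    {C : ℝ} (hb : IsSchauderBasis e f)
    (hσ : ∀ x, Tendsto (fun n => ∑ j ∈ range n, f j x) atTop (𝓝 (σ x)))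
    (hC : ∀ n, ‖e n‖ ≤ C) : IsSchauderBasis (diffSeq e) (diffCoord f σ) := by
  refine ⟨diffCoord_diffSeq hb.1 hσ, fun x => ?_⟩
  have htail : Tendsto (fun n => diffCoord f σ n x • e n) atTop (𝓝 0) :=
    (tendsto_diffCoord_apply hσ x).zero_smul_isBoundedUnder_le
      ⟨C, eventually_map.mpr (Eventually.of_forall hC)⟩
  have hlim := (hb.tendsto_basisProj x).add htail
  rw [add_zero] at hlim
  refine (tendsto_add_atTop_iff_nat 1).mp (hlim.congr fun n => ?_)
  rw [← basisProj_diffSeq_succ, basisProj_apply]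
  rfl

lemma WeaklyCauchy.exists_tendsto_bidual {e : ℕ → X} (he : WeaklyCauchy e) :
    ∃ F₀ : StrongDual ℝ (StrongDual ℝ X),
      ∀ φ : StrongDual ℝ X, Tendsto (fun n => φ (e n)) atTop (𝓝 (F₀ φ)) := by
  choose l hl using he
  exact ⟨continuousLinearMapOfTendsto (fun n => inclusionInDoubleDual ℝ X (e n))
    (tendsto_pi_nhds.mpr hl), hl⟩

lemma finrank_quotient_eq_one {K V : Type*} [Field K] [AddCommGroup V] [Module K V]
    {p : Submodule K V} {v₀ : V} (hv₀ : v₀ ∉ p) (h : ∀ w, ∃ y ∈ p, ∃ c : K, w = y + c • v₀) :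
    Module.finrank K (V ⧸ p) = 1 := by
  rw [finrank_eq_one_iff']
  refine ⟨p.mkQ v₀, by simpa using hv₀, fun w => ?_⟩
  obtain ⟨w, rfl⟩ := p.mkQ_surjective w
  obtain ⟨y, hy, c, rfl⟩ := h w
  exact ⟨c, by simp [(Submodule.Quotient.mk_eq_zero p).mpr hy]⟩

section bidual

variable {e : ℕ → X} {f : ℕ → StrongDual ℝ X} {σ : StrongDual ℝ X}
  {F₀ : StrongDual ℝ (StrongDual ℝ X)}

lemma apply_diffCoord_eq_one (hf : ∀ n m, f n (e m) = if n = m then 1 else 0)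
    (hσ : ∀ x, Tendsto (fun n => ∑ j ∈ range n, f j x) atTop (𝓝 (σ x)))
    (hF₀ : ∀ φ : StrongDual ℝ X, Tendsto (fun n => φ (e n)) atTop (𝓝 (F₀ φ))) (i : ℕ) :
    F₀ (diffCoord f σ i) = 1 :=
  tendsto_nhds_unique (hF₀ _) <| tendsto_const_nhds.congr' <|
    (eventually_ge_atTop i).mono fun n hn => by simp [diffCoord_apply_eq hf hσ, hn]

lemma notMem_range_inclusionInDoubleDual (hb : IsSchauderBasis e f)
    (hσ : ∀ x, Tendsto (fun n => ∑ j ∈ range n, f j x) atTop (𝓝 (σ x)))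
    (hF₀ : ∀ φ : StrongDual ℝ X, Tendsto (fun n => φ (e n)) atTop (𝓝 (F₀ φ))) :
    F₀ ∉ LinearMap.range (inclusionInDoubleDual ℝ X).toLinearMap := by
  rintro ⟨y, hy⟩
  have hgy (i : ℕ) : diffCoord f σ i y = 1 := by
    rw [← apply_diffCoord_eq_one hb.1 hσ hF₀ i, ← hy]
    rfl
  have hy0 : y = 0 := hb.eq_zero_of_coord_eq_zero fun i => by
    rw [← diffCoord_sub_diffCoord_succ, hgy, hgy, sub_self]
  simpa [hy0] using hgy 0

lemma exists_eq_inclusionInDoubleDual_add_smul [CompleteSpace X] {C : ℝ}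
    (hb : IsSchauderBasis e f)
    (hσ : ∀ x, Tendsto (fun n => ∑ j ∈ range n, f j x) atTop (𝓝 (σ x)))
    (hC : ∀ n, ‖e n‖ ≤ C)
    (hsum : ∀ a : ℕ → ℝ, BoundedPartialSums e a →
      ∃ s : ℝ, Tendsto (fun n => ∑ i ∈ range n, a i) atTop (𝓝 s))
    (hsup : Supershrinking (diffSeq e))
    (hF₀ : ∀ φ : StrongDual ℝ X, Tendsto (fun n => φ (e n)) atTop (𝓝 (F₀ φ)))
    (F : StrongDual ℝ (StrongDual ℝ X)) :
    ∃ (y : X) (l : ℝ), F = inclusionInDoubleDual ℝ X y + l • F₀ := by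
  have hv := hb.diffSeq hσ hC
  set a := fun i => F (diffCoord f σ i)
  have ha : BoundedPartialSums (diffSeq e) a := hv.boundedPartialSums_bidual F
  obtain ⟨S, hS⟩ := exists_norm_le_of_tendsto (tendsto_diffCoord_apply hσ)
  have hA (n : ℕ) : |a n| ≤ ‖F‖ * S := (F.le_opNorm _).trans (by gcongr; exact hS n)
  obtain ⟨l, hl⟩ := exists_tendsto_of_boundedPartialSums_diffSeq hsum ha hA hC
  obtain ⟨y, hy⟩ := hsup.2 (fun i => a i - l) (by simpa using hl.sub_const l)
    (ha.diffSeq_sub_const hC l)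
  refine ⟨y, l, hv.bidual_ext hsup.1 fun i => ?_⟩
  simp [hv.coord_eq_of_tendsto hy, apply_diffCoord_eq_one hb.1 hσ hF₀, a]

end bidual

theorem orderOneQuasireflexive_of_closedSpan_eq_top [CompleteSpace X] {e : ℕ → X}
    (hdense : closedSpan e = ⊤) (hb : IsBasicSeq e) (hsn : SemiNormalized e)
    (hss : StronglySumming e) (hsup : Supershrinking (diffSeq e)) :
    OrderOneQuasireflexive X := by
  obtain ⟨hne, K, -, hK⟩ := hb
  obtain ⟨_, C, -, hC⟩ := hsn
  obtain ⟨f, hf⟩ := HasBasisConstant.exists_biorthogonal hK hne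
  have hbasis : IsSchauderBasis e f := HasBasisConstant.isSchauderBasis hK hf
    (Submodule.dense_iff_topologicalClosure_eq_top.mpr hdense)
  obtain ⟨σ, hσ⟩ := hbasis.exists_tendsto_sum_coord hss.2
  obtain ⟨F₀, hF₀⟩ := hss.1.exists_tendsto_bidual
  refine finrank_quotient_eq_one (notMem_range_inclusionInDoubleDual hbasis hσ hF₀) fun F => ?_
  obtain ⟨y, l, rfl⟩ := exists_eq_inclusionInDoubleDual_add_smul hbasis hσ (fun n => (hC n).2)
    hss.2 hsup hF₀ F
  exact ⟨_, LinearMap.mem_range_self _ y, l, rfl⟩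

namespace Submodule

variable {S : Submodule ℝ X}

lemma coe_partialSum (u : ℕ → S) (a : ℕ → ℝ) (n : ℕ) :
    ((PartialSum u a n : S) : X) = PartialSum (fun k => (u k : X)) a n := by
  simp [PartialSum]

lemma coe_diffSeq (u : ℕ → S) (n : ℕ) :
    ((diffSeq u n : S) : X) = diffSeq (fun k => (u k : X)) n := by
  unfold diffSeq
  split_ifs <;> simp

lemma coe_mem_tailSpan {u : ℕ → S} {n : ℕ} {x : S} (hx : x ∈ tailSpan u n) :
    (x : X) ∈ tailSpan (fun k => (u k : X)) n := by
  refine map_mem_closure continuous_subtype_val hx fun y hy => ?_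
  have hle : span ℝ {x | ∃ k, n ≤ k ∧ x = u k} ≤
      (span ℝ {x | ∃ k, n ≤ k ∧ x = (u k : X)}).comap S.subtype :=
    span_le.mpr fun _ ⟨k, hk, hxk⟩ => subset_span ⟨k, hk, by rw [hxk]; rfl⟩
  exact hle hy

lemma norm_coe_partialSum (u : ℕ → S) (a : ℕ → ℝ) (n : ℕ) :
    ‖PartialSum (fun k => (u k : X)) a n‖ = ‖PartialSum u a n‖ := by
  rw [← coe_partialSum, coe_norm]

lemma boundedPartialSums_coe_iff {u : ℕ → S} {a : ℕ → ℝ} :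
    BoundedPartialSums (fun n => (u n : X)) a ↔ BoundedPartialSums u a := by
  simp only [BoundedPartialSums, norm_coe_partialSum]

lemma isBasicSeq_of_coe {u : ℕ → S} (h : IsBasicSeq fun n => (u n : X)) : IsBasicSeq u := by
  obtain ⟨hne, K, hK1, hK⟩ := h
  refine ⟨fun n hn => hne n (by simp [hn]), K, hK1, fun a m n hmn => ?_⟩
  simpa only [norm_coe_partialSum] using hK a m n hmn

lemma stronglySumming_of_coe {u : ℕ → S} (h : StronglySumming fun n => (u n : X)) :
    StronglySumming u := by
  refine ⟨fun φ => ?_, fun a ha => h.2 a (boundedPartialSums_coe_iff.mpr ha)⟩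
  obtain ⟨ψ, hψ, -⟩ := exists_extension_norm_eq S φ
  obtain ⟨l, hl⟩ := h.1 ψ
  exact ⟨l, by simpa only [hψ] using hl⟩

lemma supershrinking_of_coe (hS : IsClosed (S : Set X)) {u : ℕ → S}
    (h : Supershrinking fun n => (u n : X)) : Supershrinking u := by
  refine ⟨fun φ ε hε => ?_, fun a ha hbdd => ?_⟩
  · obtain ⟨ψ, hψ, -⟩ := exists_extension_norm_eq S φ
    obtain ⟨N, hN⟩ := h.1 ψ ε hε
    exact ⟨N, fun n hn x hx hx1 => hψ x ▸ hN n hn x (coe_mem_tailSpan hx) hx1⟩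
  · obtain ⟨z, hz⟩ := h.2 a ha (boundedPartialSums_coe_iff.mpr hbdd)
    have hzS : z ∈ S := hS.mem_of_tendsto hz <| Eventually.of_forall fun n => by
      rw [← coe_partialSum]
      exact (PartialSum u a n).2
    refine ⟨⟨z, hzS⟩, tendsto_subtype_rng.mpr ?_⟩
    simpa only [coe_partialSum] using hz

end Submodule

def toClosedSpan (e : ℕ → X) (n : ℕ) : closedSpan e :=
  ⟨e n, Submodule.le_topologicalClosure _ (Submodule.subset_span ⟨n, rfl⟩)⟩

lemma closedSpan_toClosedSpan (e : ℕ → X) : closedSpan (toClosedSpan e) = ⊤ := by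
  change (Submodule.span ℝ (Set.range (toClosedSpan e))).topologicalClosure = ⊤
  rw [← Submodule.dense_iff_topologicalClosure_eq_top, Topology.IsInducing.subtypeVal.dense_iff]
  intro x
  have himage :
      Subtype.val '' (Submodule.span ℝ (Set.range (toClosedSpan e)) : Set (closedSpan e)) =
        (Submodule.span ℝ (Set.range e) : Set X) := by
    rw [← Submodule.coe_subtype, ← Submodule.map_coe, Submodule.map_span, ← Set.range_comp]
    rfl
  exact himage ▸ x.2

/-- under the same hypotheses, the closed linear span `[e n]`
is order one quasireflexive. -/
theorem stmt1 {X : Type*} [NormedAddCommGroup X] [NormedSpace ℝ X] [CompleteSpace X]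
    (e : ℕ → X) (hb : IsBasicSeq e) (hsn : SemiNormalized e)
    (hss : StronglySumming e) (hsup : Supershrinking (diffSeq e)) :
    OrderOneQuasireflexive ↥(closedSpan e) := by
  have : CompleteSpace (closedSpan e) :=
    (Submodule.isClosed_topologicalClosure _).completeSpace_coe
  have hdiff : (fun n => ((diffSeq (toClosedSpan e) n : closedSpan e) : X)) = diffSeq e :=
    funext (Submodule.coe_diffSeq _)
  exact orderOneQuasireflexive_of_closedSpan_eq_top (closedSpan_toClosedSpan e)
    (Submodule.isBasicSeq_of_coe hb) hsn
    (Submodule.stronglySumming_of_coe hss)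
    (Submodule.supershrinking_of_coe (Submodule.isClosed_topologicalClosure _) (hdiff ▸ hsup))

end
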